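/- Under the assumption ℓ_e ≤ δ for all edges, a finite set P of points is a cover of N if and only if for every edge e=(v_a,v_b): either P intersects the complete-cover set F_c(e), or Σ_{i∈{a,b}} max_{p∈P∩F_p(v_i)} (δ−d(v_i,p))_+ ≥ ℓ_e. -/
import Mathlib


/-- The set of points of edge `e`. -/
def edgePts {X : Type} {E : Type} (len : E → ℝ) (param : E → ℝ → X) (e : E) : Set X :=
  param e '' Set.Icc 0 (len e)

/-- The set of vertices of the network (endpoints of edges). -/
def vertexSet {X : Type} {E : Type} (len : E → ℝ) (param : E → ℝ → X) : Set X :=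
  (Set.range fun e => param e 0) ∪ (Set.range fun e => param e (len e))

/-- The points of the complete covers `F_c(e)` of an edge `e`: points lying on an edge
`e'` all of whose points `δ`-cover all of `e`, or vertices `δ`-covering all of `e`. -/
def FcPts {X : Type} [MetricSpace X] {E : Type} (len : E → ℝ) (param : E → ℝ → X)
    (δ : ℝ) (e : E) : Set X :=
  {x | (∃ e' : E, x ∈ edgePts len param e' ∧
          ∀ p' ∈ edgePts len param e', ∀ p ∈ edgePts len param e, dist p p' ≤ δ)
     ∨ (x ∈ vertexSet len param ∧ ∀ p ∈ edgePts len param e, dist p x ≤ δ)}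

/-- The points of the partial covers `F_p(v)` of the edges incident to a vertex `v`:
candidate locations (edges or vertices) in the `δ`-neighborhood of `v` that do not
completely cover some edge incident to `v`. -/
def FpPts {X : Type} [MetricSpace X] {E : Type} (len : E → ℝ) (param : E → ℝ → X)
    (δ : ℝ) (v : X) : Set X :=
  {x | (∃ e' : E, x ∈ edgePts len param e' ∧
          (dist v (param e' 0) ≤ δ ∨ dist v (param e' (len e')) ≤ δ) ∧
          ∃ e : E, (param e 0 = v ∨ param e (len e) = v) ∧
            ¬ (∀ p' ∈ edgePts len param e', ∀ p ∈ edgePts len param e, dist p p' ≤ δ))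
     ∨ (x ∈ vertexSet len param ∧ dist v x ≤ δ ∧
          ∃ e : E, (param e 0 = v ∨ param e (len e) = v) ∧
            ¬ (∀ p ∈ edgePts len param e, dist p x ≤ δ))}

/-- Since `len e ≤ δ`, every point of `e` `δ`-covers all of `e`. -/
lemma full_cover_self {X : Type} [MetricSpace X] {E : Type} (len : E → ℝ) (param : E → ℝ → X)
    (δ : ℝ) (hshort : ∀ e, len e ≤ δ)
    (hdist_edge : ∀ (e : E) (q q' : ℝ), q ∈ Set.Icc 0 (len e) → q' ∈ Set.Icc 0 (len e) →
      dist (param e q) (param e q') ≤ |q - q'|) (e : E) :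
    ∀ p' ∈ edgePts len param e, ∀ p ∈ edgePts len param e, dist p p' ≤ δ := by
  rintro p' ⟨q', hq', rfl⟩ p ⟨q, hq, rfl⟩
  have h1 := hdist_edge e q q' hq hq'
  have h2 : |q - q'| ≤ len e := by
    rw [abs_le]
    exact ⟨by linarith [hq.1, hq'.2], by linarith [hq.2, hq'.1]⟩
  linarith [hshort e]

/-- If `p` is within distance `< δ` of an endpoint `v` of `e` and no edge through `p`
completely covers `e`, then `p ∈ F_p(v)`. -/
lemma mem_Fp {X : Type} [MetricSpace X] {E : Type} (len : E → ℝ) (param : E → ℝ → X)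
    (δ : ℝ) (hlen_pos : ∀ e, 0 < len e) (hshort : ∀ e, len e ≤ δ)
    (hsurj : ∀ x : X, ∃ e q, q ∈ Set.Icc 0 (len e) ∧ param e q = x)
    (hdist_edge : ∀ (e : E) (q q' : ℝ), q ∈ Set.Icc 0 (len e) → q' ∈ Set.Icc 0 (len e) →
      dist (param e q) (param e q') ≤ |q - q'|)
    (hnet : ∀ (x : X) (e : E) (q : ℝ), q ∈ Set.Icc 0 (len e) →
      x ∉ edgePts len param e →
      dist x (param e q)
        = min (dist x (param e 0) + q) (dist x (param e (len e)) + (len e - q)))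
    (e : E) (v : X) (hv : param e 0 = v ∨ param e (len e) = v)
    (p : X) (hp : dist v p < δ)
    (hnc : ∀ e' : E, p ∈ edgePts len param e' →
      ¬ ∀ p' ∈ edgePts len param e', ∀ pt ∈ edgePts len param e, dist pt p' ≤ δ) :
    p ∈ FpPts len param δ v := by
  obtain ⟨e', q', hq', rfl⟩ := hsurj p
  have hmem : param e' q' ∈ edgePts len param e' := ⟨q', hq', rfl⟩
  left
  refine ⟨e', hmem, ?_, e, hv, hnc e' hmem⟩
  by_cases hv' : v ∈ edgePts len param e'
  · obtain ⟨r, hr, rfl⟩ := hv'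
    left
    have h1 := hdist_edge e' r 0 hr ⟨le_rfl, (hlen_pos e').le⟩
    rw [sub_zero, abs_of_nonneg hr.1] at h1
    linarith [hr.2, hshort e']
  · have h := hnet v e' q' hq' hv'
    rw [h] at hp
    rcases min_lt_iff.mp hp with h1 | h2
    · exact Or.inl (by linarith [hq'.1])
    · exact Or.inr (by linarith [hq'.2])

/-- From a positive value `t ≤ sSup` over a finite set, extract a covering point. -/
lemma cover_from_sup {X : Type} [MetricSpace X] (δ : ℝ) (v x : X) (S : Set X)
    (hfin : S.Finite) (t : ℝ) (ht : 0 < t) (hx : dist x v ≤ t)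
    (hts : t ≤ sSup ((fun p => max (δ - dist v p) 0) '' S)) :
    ∃ p ∈ S, dist x p ≤ δ := by
  have hne : ((fun p => max (δ - dist v p) 0) '' S).Nonempty := by
    by_contra hne
    rw [Set.not_nonempty_iff_eq_empty] at hne
    rw [hne, Real.sSup_empty] at hts
    linarith
  obtain ⟨p, hpS, hpv⟩ := hne.csSup_mem (hfin.image _)
  refine ⟨p, hpS, ?_⟩
  have h1 : t ≤ max (δ - dist v p) 0 := hts.trans_eq hpv.symm
  have h2 : dist v p ≤ δ - t := by
    rcases le_max_iff.mp h1 with h | h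
    · linarith
    · linarith
  calc dist x p ≤ dist x v + dist v p := dist_triangle _ _ _
    _ ≤ δ := by linarith

/-- Under the assumption `ℓ_e ≤ δ` for all edges, a finite set `P` of points is a cover of
the network if and only if for every edge `e = (v_a, v_b)`: either `P` intersects the
complete-cover set `F_c(e)`, or
`Σ_{i∈{a,b}} max_{p ∈ P ∩ F_p(v_i)} (δ − d(v_i, p))₊ ≥ ℓ_e`
(the maximum over an empty set being `0`). -/
theorem delimited_edge_cover_condition
    (X : Type) [MetricSpace X] (E : Type) [Fintype E]
    (len : E → ℝ) (param : E → ℝ → X)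
    (hlen_pos : ∀ e, 0 < len e)
    (δ : ℝ) (hδ : 0 < δ)
    (hshort : ∀ e, len e ≤ δ)
    (hsurj : ∀ x : X, ∃ e q, q ∈ Set.Icc 0 (len e) ∧ param e q = x)
    (hdist_edge : ∀ (e : E) (q q' : ℝ), q ∈ Set.Icc 0 (len e) → q' ∈ Set.Icc 0 (len e) →
      dist (param e q) (param e q') ≤ |q - q'|)
    (hnet : ∀ (x : X) (e : E) (q : ℝ), q ∈ Set.Icc 0 (len e) →
      x ∉ edgePts len param e →
      dist x (param e q)
        = min (dist x (param e 0) + q) (dist x (param e (len e)) + (len e - q)))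
    (P : Finset X) :
    (∀ x : X, ∃ p ∈ P, dist x p ≤ δ) ↔
      ∀ e : E,
        (∃ p ∈ P, p ∈ FcPts len param δ e) ∨
        len e ≤
          sSup ((fun p => max (δ - dist (param e 0) p) 0) ''
              ((P : Set X) ∩ FpPts len param δ (param e 0)))
          + sSup ((fun p => max (δ - dist (param e (len e)) p) 0) ''
              ((P : Set X) ∩ FpPts len param δ (param e (len e)))) := by
  constructor
  · intro hcov e
    by_cases hFc : ∃ p ∈ P, p ∈ FcPts len param δ e
    · exact Or.inl hFc
    right
    set A := sSup ((fun p => max (δ - dist (param e 0) p) 0) ''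
        ((P : Set X) ∩ FpPts len param δ (param e 0))) with hAdef
    set B := sSup ((fun p => max (δ - dist (param e (len e)) p) 0) ''
        ((P : Set X) ∩ FpPts len param δ (param e (len e)))) with hBdef
    have hAnn : 0 ≤ A := Real.sSup_nonneg (by rintro y ⟨p, _, rfl⟩; exact le_max_right _ _)
    have hBnn : 0 ≤ B := Real.sSup_nonneg (by rintro y ⟨p, _, rfl⟩; exact le_max_right _ _)
    by_contra hlt
    push_neg at hlt
    set q := (A + (len e - B)) / 2 with hqdef
    have hAq : A < q := by rw [hqdef]; linarith
    have hqB : B < len e - q := by rw [hqdef]; linarith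
    have hq0 : 0 < q := by linarith
    have hqmem : q ∈ Set.Icc 0 (len e) := ⟨hq0.le, by linarith⟩
    obtain ⟨p, hpP, hpd⟩ := hcov (param e q)
    have hpe : p ∉ edgePts len param e := fun hpe =>
      hFc ⟨p, hpP, Or.inl ⟨e, hpe, full_cover_self len param δ hshort hdist_edge e⟩⟩
    have hmin := hnet p e q hqmem hpe
    rw [dist_comm] at hpd
    rw [hmin] at hpd
    have hnc : ∀ e' : E, p ∈ edgePts len param e' →
        ¬ ∀ p' ∈ edgePts len param e', ∀ pt ∈ edgePts len param e, dist pt p' ≤ δ :=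
      fun e' hpe' hfull => hFc ⟨p, hpP, Or.inl ⟨e', hpe', hfull⟩⟩
    rcases min_le_iff.mp hpd with h1 | h2
    · have hpFp : p ∈ FpPts len param δ (param e 0) :=
        mem_Fp len param δ hlen_pos hshort hsurj hdist_edge hnet e (param e 0)
          (Or.inl rfl) p (by rw [dist_comm]; linarith) hnc
      have hbdd : BddAbove ((fun p => max (δ - dist (param e 0) p) 0) ''
          ((P : Set X) ∩ FpPts len param δ (param e 0))) :=
        ((P.finite_toSet.inter_of_left _).image _).bddAbove
      have hle : max (δ - dist (param e 0) p) 0 ≤ A :=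
        le_csSup hbdd ⟨p, ⟨hpP, hpFp⟩, rfl⟩
      have : q ≤ δ - dist (param e 0) p := by rw [dist_comm]; linarith
      have := le_trans this (le_max_left _ 0)
      linarith
    · have hpFp : p ∈ FpPts len param δ (param e (len e)) :=
        mem_Fp len param δ hlen_pos hshort hsurj hdist_edge hnet e (param e (len e))
          (Or.inr rfl) p (by rw [dist_comm]; linarith) hnc
      have hbdd : BddAbove ((fun p => max (δ - dist (param e (len e)) p) 0) ''
          ((P : Set X) ∩ FpPts len param δ (param e (len e)))) :=
        ((P.finite_toSet.inter_of_left _).image _).bddAbove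
      have hle : max (δ - dist (param e (len e)) p) 0 ≤ B :=
        le_csSup hbdd ⟨p, ⟨hpP, hpFp⟩, rfl⟩
      have : len e - q ≤ δ - dist (param e (len e)) p := by rw [dist_comm]; linarith
      have := le_trans this (le_max_left _ 0)
      linarith
  · intro h x
    obtain ⟨e, q, hq, rfl⟩ := hsurj x
    rcases h e with ⟨p, hpP, hpFc⟩ | hsum
    · refine ⟨p, hpP, ?_⟩
      rcases hpFc with ⟨e', hpe', hcov⟩ | ⟨_, hcov⟩
      · exact hcov p hpe' _ ⟨q, hq, rfl⟩
      · exact hcov _ ⟨q, hq, rfl⟩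
    · set A := sSup ((fun p => max (δ - dist (param e 0) p) 0) ''
          ((P : Set X) ∩ FpPts len param δ (param e 0))) with hAdef
      set B := sSup ((fun p => max (δ - dist (param e (len e)) p) 0) ''
          ((P : Set X) ∩ FpPts len param δ (param e (len e)))) with hBdef
      have hAnn : 0 ≤ A := Real.sSup_nonneg (by rintro y ⟨p, _, rfl⟩; exact le_max_right _ _)
      have hBnn : 0 ≤ B := Real.sSup_nonneg (by rintro y ⟨p, _, rfl⟩; exact le_max_right _ _)
      have h0len := hlen_pos e
      have hd1 : dist (param e q) (param e 0) ≤ q := by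
        have := hdist_edge e q 0 hq ⟨le_rfl, h0len.le⟩
        rwa [sub_zero, abs_of_nonneg hq.1] at this
      have hd2 : dist (param e q) (param e (len e)) ≤ len e - q := by
        have := hdist_edge e q (len e) hq ⟨h0len.le, le_rfl⟩
        rwa [abs_of_nonpos (by linarith [hq.2]), neg_sub] at this
      have hcase : (0 < A ∧ dist (param e q) (param e 0) ≤ A) ∨
          (0 < B ∧ dist (param e q) (param e (len e)) ≤ B) := by
        rcases le_or_gt q A with hqA | hqA
        · rcases lt_or_ge 0 A with hA | hA
          · exact Or.inl ⟨hA, le_trans hd1 hqA⟩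
          · exact Or.inr ⟨by linarith [hq.1], by linarith [hq.1]⟩
        · exact Or.inr ⟨by linarith [hq.2], by linarith⟩
      rcases hcase with ⟨hA, hdA⟩ | ⟨hB, hdB⟩
      · obtain ⟨p, ⟨hpP, _⟩, hdp⟩ := cover_from_sup δ (param e 0) (param e q)
          ((P : Set X) ∩ FpPts len param δ (param e 0))
          (P.finite_toSet.inter_of_left _) A hA hdA le_rfl
        exact ⟨p, hpP, hdp⟩
      · obtain ⟨p, ⟨hpP, _⟩, hdp⟩ := cover_from_sup δ (param e (len e)) (param e q)
          ((P : Set X) ∩ FpPts len param δ (param e (len e)))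
          (P.finite_toSet.inter_of_left _) B hB hdB le_rfl
        exact ⟨p, hpP, hdp⟩
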